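/- Let f : ℕ → ℝ be a sequence such that |f(n)| ≤ α·e^{s₀·n} for all n ≥ 1 (with α > 0, s₀ > 0). Then for every s > max(s₀, 0), the discrete Laplace transform of the sequence of partial sums n ↦ ∑_{k=1}^{n-1} f(k) satisfies ℓ_d{∑_{k=1}^{n-1} f(k)}(s) = ℓ_d{f(n)}(s)/(e^{s} − 1). -/

import Mathlib

/-!
Put `x = e^{-s}` and `a k = f (k+1) e^{-s(k+1)}`. The `n`-th term of the transform of the partial
sums is `∑_{k<n} a k x^{n-k}`, the Cauchy product of `a` with the geometric series
`(x^m)_{m ≥ 1}`. For `s > s₀` the series `∑ a k` converges absolutely and for `s > 0` we have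
`|x| < 1`, so the Cauchy product sums to `(∑ a k) · x / (1 - x) = ℓ_d{f}(s) / (e^s - 1)`.
-/

open Finset

theorem hasSum_sum_range_mul_pow_sub {𝕜 : Type*} [NormedDivisionRing 𝕜] [CompleteSpace 𝕜]
    {a : ℕ → 𝕜} {x : 𝕜} (ha : Summable fun n => ‖a n‖) (hx : ‖x‖ < 1) :
    HasSum (fun n => ∑ k ∈ range n, a k * x ^ (n - k)) ((∑' n, a n) * (1 - x)⁻¹ * x) := by
  have hcauchy := hasSum_sum_range_mul_of_summable_norm ha
    (summable_norm_geometric_of_norm_lt_one hx)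
  rw [tsum_geometric_of_norm_lt_one hx] at hcauchy
  rw [← hasSum_nat_add_iff' 1, range_one, sum_singleton, sum_range_zero, sub_zero]
  have hshift : (fun n => ∑ k ∈ range (n + 1), a k * x ^ (n + 1 - k)) =
      fun n => (∑ k ∈ range (n + 1), a k * x ^ (n - k)) * x := by
    funext n
    rw [sum_mul]
    refine sum_congr rfl fun k hk => ?_
    rw [mul_assoc, ← pow_succ, Nat.sub_add_comm (Nat.lt_succ_iff.mp (mem_range.mp hk))]
  rw [hshift]
  exact hcauchy.mul_right x

theorem sum_Ioo_zero_succ_eq_sum_range {M : Type*} [AddCommMonoid M] (f : ℕ → M) (n : ℕ) :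
    ∑ k ∈ Ioo 0 (n + 1), f k = ∑ k ∈ range n, f (k + 1) := by
  rw [← Ico_add_one_left_eq_Ioo, range_eq_Ico, sum_Ico_add']

theorem Real.exp_neg_mul_succ_mul_exp_neg_pow_sub (s : ℝ) {k n : ℕ} (hkn : k ≤ n) :
    Real.exp (-s * (k + 1)) * Real.exp (-s) ^ (n - k) = Real.exp (-s * (n + 1)) := by
  rw [← Real.exp_nat_mul, ← Real.exp_add, Nat.cast_sub hkn]
  ring_nf

theorem summable_norm_mul_exp_neg_of_abs_le {f : ℕ → ℝ} {α s₀ s : ℝ}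
    (hf : ∀ n : ℕ, 1 ≤ n → |f n| ≤ α * Real.exp (s₀ * n)) (hs : s₀ < s) :
    Summable fun n : ℕ => ‖f (n + 1) * Real.exp (-s * (n + 1))‖ := by
  have hr : Real.exp (s₀ - s) < 1 := Real.exp_lt_one_iff.mpr (sub_neg.mpr hs)
  refine Summable.of_nonneg_of_le (fun _ => norm_nonneg _) (fun n => ?_)
    (((summable_geometric_of_lt_one (Real.exp_pos _).le hr).mul_left α).comp_injective
      (add_left_injective 1))
  calc ‖f (n + 1) * Real.exp (-s * (n + 1))‖
      = |f (n + 1)| * Real.exp (-s * (n + 1)) := by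
        rw [Real.norm_eq_abs, abs_mul, abs_of_pos (Real.exp_pos _)]
    _ ≤ α * Real.exp (s₀ * (n + 1)) * Real.exp (-s * (n + 1)) := by
      gcongr
      exact_mod_cast hf (n + 1) (Nat.le_add_left 1 n)
    _ = α * Real.exp (s₀ - s) ^ (n + 1) := by
      rw [mul_assoc, ← Real.exp_add, ← Real.exp_nat_mul]
      push_cast
      ring_nf

theorem dlt_partial_sums_general (f : ℕ → ℝ) (α s₀ : ℝ)
    (hf : ∀ n : ℕ, 1 ≤ n → |f n| ≤ α * Real.exp (s₀ * n)) :
    ∀ s : ℝ, max s₀ 0 < s →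
      (∑' n : ℕ, (∑ k ∈ Finset.Ioo 0 (n + 1), f k) * Real.exp (-s * (n + 1))) =
        (∑' n : ℕ, f (n + 1) * Real.exp (-s * (n + 1))) / (Real.exp s - 1) := by
  intro s hs
  obtain ⟨hs₀s, hs0⟩ := max_lt_iff.mp hs
  have hx : ‖Real.exp (-s)‖ < 1 := by
    rw [Real.norm_eq_abs, abs_of_pos (Real.exp_pos _)]
    exact Real.exp_lt_one_iff.mpr (neg_lt_zero.mpr hs0)
  have hcauchy := hasSum_sum_range_mul_pow_sub (summable_norm_mul_exp_neg_of_abs_le hf hs₀s) hx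
  have hterm : ∀ n : ℕ, (∑ k ∈ Ioo 0 (n + 1), f k) * Real.exp (-s * (n + 1)) =
      ∑ k ∈ range n, f (k + 1) * Real.exp (-s * (k + 1)) * Real.exp (-s) ^ (n - k) := by
    intro n
    rw [sum_Ioo_zero_succ_eq_sum_range, sum_mul]
    refine sum_congr rfl fun k hk => ?_
    rw [mul_assoc, Real.exp_neg_mul_succ_mul_exp_neg_pow_sub s (mem_range.mp hk).le]
  have hfactor : (1 - Real.exp (-s))⁻¹ * Real.exp (-s) = (Real.exp s - 1)⁻¹ := by
    rw [Real.exp_neg]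
    field_simp
  rw [tsum_congr hterm, hcauchy.tsum_eq, mul_assoc, hfactor, div_eq_mul_inv]

/-- Transform of the sequence of partial sums `n ↦ ∑_{k=1}^{n-1} f(k)`:
for `s > max s₀ 0`, it equals `ℓ_d{f(n)}(s) / (e^s - 1)`. -/
theorem dlt_partial_sums (f : ℕ → ℝ) (α s₀ : ℝ) (hα : 0 < α) (hs₀ : 0 < s₀)
    (hf : ∀ n : ℕ, 1 ≤ n → |f n| ≤ α * Real.exp (s₀ * n)) :
    ∀ s : ℝ, max s₀ 0 < s →
      (∑' n : ℕ, (∑ k ∈ Finset.Ioo 0 (n + 1), f k) * Real.exp (-s * (n + 1))) =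
        (∑' n : ℕ, f (n + 1) * Real.exp (-s * (n + 1))) / (Real.exp s - 1) :=
  dlt_partial_sums_general f α s₀ hf
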